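/- Two finite-dimensional complex symplectic representations of a reductive group G that are isomorphic as G-modules are isomorphic as symplectic representations: if (V₁, ω₁) and (V₂, ω₂) are completely reducible G-modules with G-invariant symplectic forms and there is a G-module isomorphism V₁ ≅ V₂, then there exists a G-module isomorphism φ : V₁ → V₂ with ω₂(φ(v), φ(w)) = ω₁(v,w) for all v, w ∈ V₁. -/

import Mathlib

/-!
Pull `ω₂` back along `ψ` to a second invariant symplectic form `B` on `V₁`. Since `B` is
nondegenerate there is a unique `A` with `B (A v) w = ω₁ v w`; it is invertible, commutes with
`G`, and is self-adjoint for `B` because both forms are alternating. Over `ℂ` an invertible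
endomorphism has a square root `S = p(A)` that is a polynomial in `A`: interpolate square roots at
the eigenvalues, then correct by Newton's method in the commutative algebra `ℂ[A]`. Being a
polynomial in `A`, `S` still commutes with `G` and is self-adjoint, so
`B (S v) (S w) = B (S² v) w = ω₁ v w`, and `φ = ψ ∘ S` is the required isomorphism.
-/

open Polynomial

theorem Polynomial.dvd_pow_natDegree_of_forall_isRoot {K : Type*} [Field K] [IsAlgClosed K]
    {p g : K[X]} (hp : p ≠ 0) (h : ∀ a, p.IsRoot a → g.IsRoot a) : p ∣ g ^ p.natDegree := by
  classical
  rcases eq_or_ne g 0 with rfl | hg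
  · rcases eq_or_ne p.natDegree 0 with hd | hd
    · rw [hd, pow_zero]
      exact (isUnit_iff_degree_eq_zero.2 ((degree_eq_iff_natDegree_eq hp).2 hd)).dvd
    · rw [zero_pow hd]
      exact dvd_zero p
  refine (IsAlgClosed.dvd_iff_roots_le_roots hp (pow_ne_zero _ hg)).2 ?_
  rw [roots_pow, Multiset.le_iff_count]
  intro a
  rw [Multiset.count_nsmul]
  by_cases ha : a ∈ p.roots
  · have hga : 1 ≤ g.roots.count a :=
      Multiset.one_le_count_iff_mem.2 ((mem_roots hg).2 (h a (isRoot_of_mem_roots ha)))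
    calc p.roots.count a ≤ Multiset.card p.roots := Multiset.count_le_card _ _
      _ ≤ p.natDegree := card_roots' p
      _ ≤ p.natDegree * g.roots.count a := Nat.le_mul_of_pos_right _ hga
  · simp [Multiset.count_eq_zero.2 ha]

theorem IsIntegral.isNilpotent_aeval_of_forall_isRoot {K A : Type*} [Field K] [IsAlgClosed K]
    [Ring A] [Algebra K A] {x : A} (hx : IsIntegral K x) {g : K[X]}
    (h : ∀ μ, (minpoly K x).IsRoot μ → g.IsRoot μ) : IsNilpotent (aeval x g) :=
  ⟨_, by simpa using minpoly.dvd_iff.1 (dvd_pow_natDegree_of_forall_isRoot (minpoly.ne_zero hx) h)⟩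

theorem exists_sq_eq_of_isNilpotent_sq_sub {R : Type*} [CommRing R] {a x : R}
    (h2 : IsUnit (2 : R)) (ha : IsUnit a) (hx : IsNilpotent (x ^ 2 - a)) : ∃ r, r ^ 2 = a := by
  have hxu : IsUnit x := (isUnit_pow_iff two_ne_zero).1 <| by
    simpa using hx.isUnit_add_left_of_commute ha (Commute.all _ _)
  obtain ⟨r, ⟨-, hr⟩, -⟩ := existsUnique_nilpotent_sub_and_aeval_eq_zero (P := X ^ 2 - C a)
    (x := x) (by simpa using hx) (by simpa [one_add_one_eq_two] using h2.mul hxu)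
  exact ⟨r, by simpa [sub_eq_zero] using hr⟩

theorem exists_sq_eq_of_isUnit {K R : Type*} [Field K] [IsAlgClosed K] [NeZero (2 : K)]
    [CommRing R] [Algebra K R] [FiniteDimensional K R] {a : R} (ha : IsUnit a) :
    ∃ r, r ^ 2 = a := by
  classical
  have hq : minpoly K a ≠ 0 := minpoly.ne_zero_of_finite K a
  choose sqrt hsqrt using fun z : K => IsAlgClosed.exists_pow_nat_eq z two_pos
  -- `p₀` is a square root at every root of `minpoly K a`, so `p₀(a) ^ 2 - a` is nilpotent.
  set p₀ : K[X] := Lagrange.interpolate (minpoly K a).roots.toFinset id sqrt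
  have hroot : ∀ μ, (minpoly K a).IsRoot μ → (p₀ ^ 2 - X).IsRoot μ := fun μ hμ => by
    have hμ' : μ ∈ (minpoly K a).roots.toFinset := by simpa [hq] using hμ
    have hp₀ : p₀.eval μ = sqrt μ := Lagrange.eval_interpolate_at_node sqrt (Set.injOn_id _) hμ'
    simp [hp₀, hsqrt]
  have h2 : IsUnit (2 : R) := by
    simpa only [map_ofNat] using (two_ne_zero (α := K)).isUnit.map (algebraMap K R)
  exact exists_sq_eq_of_isNilpotent_sq_sub h2 ha <| by
    simpa using (Algebra.IsIntegral.isIntegral a).isNilpotent_aeval_of_forall_isRoot hroot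

open Algebra in
theorem Module.End.exists_aeval_sq_eq {K V : Type*} [Field K] [IsAlgClosed K] [NeZero (2 : K)]
    [AddCommGroup V] [Module K V] [FiniteDimensional K V] {f : Module.End K V} (hf : IsUnit f) :
    ∃ p : K[X], aeval f p ^ 2 = f := by
  have : IsArtinianRing K[f] := IsArtinianRing.of_finite K K[f]
  have hf' : IsUnit (⟨f, self_mem_adjoin_singleton K f⟩ : K[f]) :=
    IsArtinianRing.isUnit_of_mem_nonZeroDivisors <| mem_nonZeroDivisors_of_injective
      (f := K[f].val) Subtype.val_injective hf.mem_nonZeroDivisors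
  obtain ⟨r, hr⟩ := exists_sq_eq_of_isUnit (K := K) hf'
  obtain ⟨p, hp⟩ : r.1 ∈ (aeval f).range := by
    rw [← adjoin_singleton_eq_range_aeval K f]
    exact r.2
  exact ⟨p, (congrArg (· ^ 2) hp).trans (congrArg Subtype.val hr)⟩

theorem LinearMap.IsAdjointPair.aeval {K V : Type*} [Field K] [AddCommGroup V] [Module K V]
    {B : LinearMap.BilinForm K V} {f : Module.End K V} (hf : IsAdjointPair B B f f) (p : K[X]) :
    IsAdjointPair B B (aeval f p) (aeval f p) := by
  induction p using Polynomial.induction_on with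
  | C a => simpa [Algebra.algebraMap_eq_smul_one] using isAdjointPair_one.smul a
  | add p q hp hq =>
    rw [map_add]
    exact hp.add hq
  | monomial n a ih =>
    rw [pow_succ, ← mul_assoc, map_mul, aeval_X]
    have h := ih.mul hf
    rwa [(Algebra.commute_of_mem_adjoin_self (aeval_mem_adjoin_singleton K f)).eq] at h

theorem Representation.exists_equivariant_isometry_of_isAlt {G K V : Type*} [Group G] [Field K]
    [IsAlgClosed K] [NeZero (2 : K)] [AddCommGroup V] [Module K V] [FiniteDimensional K V]
    (ρ : Representation K G V) {B B' : LinearMap.BilinForm K V}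
    (hB : B.Nondegenerate) (hB' : B'.Nondegenerate) (hBalt : B.IsAlt) (hB'alt : B'.IsAlt)
    (hBρ : ∀ g v w, B (ρ g v) (ρ g w) = B v w) (hB'ρ : ∀ g v w, B' (ρ g v) (ρ g w) = B' v w) :
    ∃ S : V ≃ₗ[K] V, (∀ g v, S (ρ g v) = ρ g (S v)) ∧ ∀ v w, B (S v) (S w) = B' v w := by
  set A := B'.symmCompOfNondegenerate B hB
  have hA : ∀ v w, B (A v) w = B' v w := fun v w => B'.symmCompOfNondegenerate_left_apply hB w v
  have hAadj : LinearMap.IsAdjointPair B B A A := fun v w => by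
    rw [hA, ← LinearMap.IsAlt.neg hBalt, hA, LinearMap.IsAlt.neg hB'alt]
  have hAunit : IsUnit A := by
    have hinj : Function.Injective A := (injective_iff_map_eq_zero A).2 fun v hv =>
      hB'.1 v fun w => by rw [← hA, hv, map_zero, LinearMap.zero_apply]
    exact (Module.End.isUnit_iff A).2 ⟨hinj, LinearMap.injective_iff_surjective.1 hinj⟩
  have hAρ : ∀ g v, A (ρ g v) = ρ g (A v) := fun g v => sub_eq_zero.1 <| hB.1 _ fun w => by
    rw [map_sub, LinearMap.sub_apply, sub_eq_zero, hA, ← ρ.self_inv_apply g w, hBρ, hB'ρ, hA]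
  obtain ⟨p, hp⟩ := Module.End.exists_aeval_sq_eq hAunit
  have hSunit : IsUnit (aeval A p) := (isUnit_pow_iff two_ne_zero).1 (by rwa [hp])
  have hSρ : ∀ g, Commute (ρ g) (aeval A p) := fun g =>
    Algebra.commute_of_mem_adjoin_singleton_of_commute (aeval_mem_adjoin_singleton K A)
      (LinearMap.ext fun v => (hAρ g v).symm)
  refine ⟨LinearEquiv.ofBijective _ ((Module.End.isUnit_iff _).1 hSunit),
    fun g v => (LinearMap.congr_fun (hSρ g) v).symm, fun v w => ?_⟩
  simp only [LinearEquiv.ofBijective_apply]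
  rw [hAadj.aeval p, ← Module.End.mul_apply, ← pow_two, hp, ← hAadj, hA]

theorem stmt9_general {G V₁ V₂ : Type*} [Group G]
    [AddCommGroup V₁] [Module ℂ V₁] [FiniteDimensional ℂ V₁]
    [AddCommGroup V₂] [Module ℂ V₂] [FiniteDimensional ℂ V₂]
    (ρ₁ : Representation ℂ G V₁) (ρ₂ : Representation ℂ G V₂)
    (ω₁ : V₁ →ₗ[ℂ] V₁ →ₗ[ℂ] ℂ) (ω₂ : V₂ →ₗ[ℂ] V₂ →ₗ[ℂ] ℂ)
    (halt₁ : ∀ v, ω₁ v v = 0)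
    (hnd₁ : ∀ v, (∀ w, ω₁ v w = 0) → v = 0)
    (hinv₁ : ∀ (g : G) (v w : V₁), ω₁ (ρ₁ g v) (ρ₁ g w) = ω₁ v w)
    (halt₂ : ∀ v, ω₂ v v = 0)
    (hnd₂ : ∀ v, (∀ w, ω₂ v w = 0) → v = 0)
    (hinv₂ : ∀ (g : G) (v w : V₂), ω₂ (ρ₂ g v) (ρ₂ g w) = ω₂ v w)
    (ψ : V₁ ≃ₗ[ℂ] V₂)
    (hψ : ∀ (g : G) (v : V₁), ψ (ρ₁ g v) = ρ₂ g (ψ v)) :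
    ∃ φ : V₁ ≃ₗ[ℂ] V₂,
      (∀ (g : G) (v : V₁), φ (ρ₁ g v) = ρ₂ g (φ v)) ∧
      (∀ v w : V₁, ω₂ (φ v) (φ w) = ω₁ v w) := by
  have hω₁ : ω₁.Nondegenerate :=
    (LinearMap.IsAlt.isRefl halt₁).nondegenerate_iff_separatingLeft.2 hnd₁
  have hω₂ : ω₂.Nondegenerate :=
    (LinearMap.IsAlt.isRefl halt₂).nondegenerate_iff_separatingLeft.2 hnd₂
  obtain ⟨S, hSρ, hSω⟩ := ρ₁.exists_equivariant_isometry_of_isAlt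
    (LinearMap.BilinForm.Nondegenerate.congr ψ.symm hω₂) hω₁ (fun v => halt₂ (ψ v)) halt₁
    (fun g v w => by simp [hψ, hinv₂]) hinv₁
  refine ⟨S.trans ψ, fun g v => ?_, fun v w => ?_⟩
  · simp only [LinearEquiv.trans_apply, hSρ, hψ]
  · exact hSω v w

theorem stmt9 {G V₁ V₂ : Type*} [Group G]
    [AddCommGroup V₁] [Module ℂ V₁] [FiniteDimensional ℂ V₁]
    [AddCommGroup V₂] [Module ℂ V₂] [FiniteDimensional ℂ V₂]
    (ρ₁ : Representation ℂ G V₁) (ρ₂ : Representation ℂ G V₂)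
    (ω₁ : V₁ →ₗ[ℂ] V₁ →ₗ[ℂ] ℂ) (ω₂ : V₂ →ₗ[ℂ] V₂ →ₗ[ℂ] ℂ)
    (halt₁ : ∀ v, ω₁ v v = 0)
    (hnd₁ : ∀ v, (∀ w, ω₁ v w = 0) → v = 0)
    (hinv₁ : ∀ (g : G) (v w : V₁), ω₁ (ρ₁ g v) (ρ₁ g w) = ω₁ v w)
    (halt₂ : ∀ v, ω₂ v v = 0)
    (hnd₂ : ∀ v, (∀ w, ω₂ v w = 0) → v = 0)
    (hinv₂ : ∀ (g : G) (v w : V₂), ω₂ (ρ₂ g v) (ρ₂ g w) = ω₂ v w)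
    (hcr₁ : ∀ W : Submodule ℂ V₁, (∀ g : G, W.map (ρ₁ g) ≤ W) →
      ∃ W' : Submodule ℂ V₁, (∀ g : G, W'.map (ρ₁ g) ≤ W') ∧ IsCompl W W')
    (hcr₂ : ∀ W : Submodule ℂ V₂, (∀ g : G, W.map (ρ₂ g) ≤ W) →
      ∃ W' : Submodule ℂ V₂, (∀ g : G, W'.map (ρ₂ g) ≤ W') ∧ IsCompl W W')
    (ψ : V₁ ≃ₗ[ℂ] V₂)
    (hψ : ∀ (g : G) (v : V₁), ψ (ρ₁ g v) = ρ₂ g (ψ v)) :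
    ∃ φ : V₁ ≃ₗ[ℂ] V₂,
      (∀ (g : G) (v : V₁), φ (ρ₁ g v) = ρ₂ g (φ v)) ∧
      (∀ v w : V₁, ω₂ (φ v) (φ w) = ω₁ v w) :=
  stmt9_general ρ₁ ρ₂ ω₁ ω₂ halt₁ hnd₁ hinv₁ halt₂ hnd₂ hinv₂ ψ hψ
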